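/- Let D be an n×n real symmetric positive-definite matrix with largest eigenvalue λ, let κ > 0 and let ψ(x) = e^{−κ|x|}. Then for every C¹ function v : ℝ → ℝⁿ such that v and v' are bounded, |v(0)|_D² ≤ max( (1 + κλ)/2, λ/2 ) · ∫_ℝ ψ(x) ( |v(x)|² + |v'(x)|_D² ) dx. -/

import Mathlib

noncomputable section

open MeasureTheory Filter Real Set

abbrev EucSp (n : ℕ) := EuclideanSpace ℝ (Fin n)

variable {n : ℕ}

/-- The scalar product `⟨v, w⟩_D = v · (D w)` associated to the matrix `D`. -/
def dotD (D : Matrix (Fin n) (Fin n) ℝ) (v w : EucSp n) : ℝ :=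
  ∑ i, v i * ∑ j, D i j * w j

/-- The norm `|v|_D = ⟨v, v⟩_D ^ (1/2)` associated to the matrix `D`. -/
def normD (D : Matrix (Fin n) (Fin n) ℝ) (v : EucSp n) : ℝ :=
  Real.sqrt (dotD D v v)

/-- The matrix `D` acting on a vector. -/
def matVec (D : Matrix (Fin n) (Fin n) ℝ) (v : EucSp n) : EucSp n :=
  WithLp.toLp 2 (fun i => ∑ j, D i j * v j)

/-- Quadratic form of the Hessian of `V` at `p`, evaluated on `w`. -/
def hessQ (V : EucSp n → ℝ) (p w : EucSp n) : ℝ :=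
  inner ℝ w ((fderiv ℝ (gradient V) p) w)

/-- Positive definiteness of the Hessian of `V` at `p`. -/
def HessPosDef (V : EucSp n → ℝ) (p : EucSp n) : Prop :=
  ∀ w : EucSp n, w ≠ 0 → 0 < hessQ V p w

/-- `M₀`: the set of nondegenerate minimum points of `V` in the level set `V⁻¹({0})`. -/
def M0 (V : EucSp n → ℝ) : Set (EucSp n) :=
  {m | V m = 0 ∧ gradient V m = 0 ∧ HessPosDef V m}

/-- Hypothesis (Coerc). -/
def Coerc (V : EucSp n → ℝ) : Prop :=
  ∃ ε > (0:ℝ), ∃ R₀ > (0:ℝ), ∀ v : EucSp n, R₀ ≤ ‖v‖ →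
    ε * ‖v‖ ^ 2 ≤ (inner ℝ v (gradient V v) : ℝ)

/-- Hypothesis (OnlyMin). -/
def OnlyMin (V : EucSp n → ℝ) : Prop :=
  ∀ v : EucSp n, V v = 0 → gradient V v = 0 → HessPosDef V v

/-- Classical solution of `u_t = -∇V(u) + D u_xx` on `ℝ × (0,∞)`,
with the partial derivatives given as data `ux`, `uxx`, `ut`. -/
def IsClassicalSolution (V : EucSp n → ℝ) (D : Matrix (Fin n) (Fin n) ℝ)
    (u ux uxx ut : ℝ → ℝ → EucSp n) : Prop :=
  ContinuousOn (fun p : ℝ × ℝ => u p.1 p.2) (Set.univ ×ˢ Set.Ici 0) ∧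
  (∀ (x : ℝ), ∀ t > (0:ℝ), HasDerivAt (fun y => u y t) (ux x t) x) ∧
  (∀ (x : ℝ), ∀ t > (0:ℝ), HasDerivAt (fun y => ux y t) (uxx x t) x) ∧
  (∀ (x : ℝ), ∀ t > (0:ℝ), HasDerivAt (fun s => u x s) (ut x t) t) ∧
  ContinuousOn (fun p : ℝ × ℝ => ux p.1 p.2) (Set.univ ×ˢ Set.Ioi 0) ∧
  ContinuousOn (fun p : ℝ × ℝ => uxx p.1 p.2) (Set.univ ×ˢ Set.Ioi 0) ∧
  ContinuousOn (fun p : ℝ × ℝ => ut p.1 p.2) (Set.univ ×ˢ Set.Ioi 0) ∧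
  ∀ (x : ℝ), ∀ t > (0:ℝ), ut x t = -gradient V (u x t) + matVec D (uxx x t)

/-- Regular and bounded solution: bounded on `ℝ × [0,∞)`, and for every `ε > 0`
all partial derivatives of order `≤ 3` exist, are continuous and bounded on `ℝ × [ε,∞)`. -/
def RegularBounded (u : ℝ → ℝ → EucSp n) : Prop :=
  (∃ C, ∀ x t : ℝ, 0 ≤ t → ‖u x t‖ ≤ C) ∧
  ∀ ε > (0:ℝ),
    ContDiffOn ℝ 3 (fun p : ℝ × ℝ => u p.1 p.2) (Set.univ ×ˢ Set.Ici ε) ∧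
    ∀ i : ℕ, i ≤ 3 → ∃ C, ∀ p ∈ (Set.univ ×ˢ Set.Ici ε : Set (ℝ × ℝ)),
      ‖iteratedFDerivWithin ℝ i (fun q : ℝ × ℝ => u q.1 q.2)
        (Set.univ ×ˢ Set.Ici ε) p‖ ≤ C

/-- Bistable solution connecting `mm` to `mp`. -/
def Bistable (u : ℝ → ℝ → EucSp n) (mm mp : EucSp n) : Prop :=
  Tendsto (fun t => Filter.limsup (fun x => ‖u x t - mm‖) Filter.atBot)
    Filter.atTop (nhds 0) ∧
  Tendsto (fun t => Filter.limsup (fun x => ‖u x t - mp‖) Filter.atTop)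
    Filter.atTop (nhds 0)

/-- The energy (Lagrangian) density `½|w|_D² + V(v)`. -/
def lagr (V : EucSp n → ℝ) (D : Matrix (Fin n) (Fin n) ℝ) (v w : EucSp n) : ℝ :=
  (1/2) * dotD D w w + V v

/-- Hypothesis (E_fin): the asymptotic energy is not `-∞`. -/
def EFin (V : EucSp n → ℝ) (D : Matrix (Fin n) (Fin n) ℝ)
    (u ux : ℝ → ℝ → EucSp n) : Prop :=
  ∃ c > (0:ℝ), (⊥ : EReal) <
    Filter.liminf
      (fun t => ((∫ x in (-(c*t))..(c*t), lagr V D (u x t) (ux x t) : ℝ) : EReal))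
      Filter.atTop

/-- Stationary solution: a `C²` function with `D u'' = ∇V(u)`. -/
def IsStationarySol (V : EucSp n → ℝ) (D : Matrix (Fin n) (Fin n) ℝ)
    (w : ℝ → EucSp n) : Prop :=
  ContDiff ℝ 2 w ∧ ∀ x : ℝ, matVec D (deriv (deriv w) x) = gradient V (w x)

/-- `w(x) → mm` as `x → -∞` and `w(x) → mp` as `x → +∞`. -/
def Connects (w : ℝ → EucSp n) (mm mp : EucSp n) : Prop :=
  Tendsto w atBot (nhds mm) ∧ Tendsto w atTop (nhds mp)

/-- `S(M₀)`: bistable stationary solutions connecting points of `M₀`. -/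
def SM0 (V : EucSp n → ℝ) (D : Matrix (Fin n) (Fin n) ℝ) : Set (ℝ → EucSp n) :=
  {w | IsStationarySol V D w ∧ ∃ mm ∈ M0 V, ∃ mp ∈ M0 V, Connects w mm mp}

/-- `I(S(M₀))`: trajectories of bistable stationary solutions in phase space `ℝ²ⁿ`. -/
def ISM0 (V : EucSp n → ℝ) (D : Matrix (Fin n) (Fin n) ℝ) : Set (EucSp n × EucSp n) :=
  {p | ∃ w ∈ SM0 V D, ∃ x : ℝ, p = (w x, deriv w x)}

/-- `λ_{V,min}`: smallest eigenvalue of the Hessians of `V` at points of `M₀`. -/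
def lamMin (V : EucSp n → ℝ) : ℝ :=
  sInf {l | ∃ m ∈ M0 V, ∃ w : EucSp n, ‖w‖ = 1 ∧ l = hessQ V m w}

/-- `λ_{V,max}`: largest eigenvalue of the Hessians of `V` at points of `M₀`. -/
def lamMax (V : EucSp n → ℝ) : ℝ :=
  sSup {l | ∃ m ∈ M0 V, ∃ w : EucSp n, ‖w‖ = 1 ∧ l = hessQ V m w}

/-- `d_Esc` is admissible: positive and, for every `m ∈ M₀` and every `v` with
`|v-m|_D ≤ d_Esc`, every eigenvalue of `D²V(v)` lies in `[λ_{V,min}/2, 2 λ_{V,max}]`. -/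
def EscHyp (V : EucSp n → ℝ) (D : Matrix (Fin n) (Fin n) ℝ) (dEsc : ℝ) : Prop :=
  0 < dEsc ∧ ∀ m ∈ M0 V, ∀ v : EucSp n, normD D (v - m) ≤ dEsc →
    ∀ w : EucSp n, ‖w‖ = 1 → lamMin V / 2 ≤ hessQ V v w ∧ hessQ V v w ≤ 2 * lamMax V

/-- `q = min_{m ∈ M₀} inf_{v ≠ m} V(v)/|v-m|²`. -/
def qlow (V : EucSp n → ℝ) : ℝ :=
  sInf {r | ∃ m ∈ M0 V, ∃ v : EucSp n, v ≠ m ∧ r = V v / ‖v - m‖ ^ 2}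

/-- The weighting `c_E = 1 / max(1, -4q)` of the energy in the firewall function. -/
def cEn (V : EucSp n → ℝ) : ℝ := 1 / max 1 (-(4 * qlow V))

/-- The weight `ψ_κ(x) = e^{-κ|x|}`. -/
def psiW (κ x : ℝ) : ℝ := Real.exp (-(κ * |x|))

/-- The firewall functional. -/
def firewall (V : EucSp n → ℝ) (D : Matrix (Fin n) (Fin n) ℝ) (κ : ℝ)
    (u ux : ℝ → ℝ → EucSp n) (ξ t : ℝ) : ℝ :=
  ∫ x : ℝ, psiW κ (x - ξ) *
    (cEn V * lagr V D (u x t) (ux x t) + (1/2) * ‖u x t‖ ^ 2)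

/-- `Σ_Esc(t) = {x : |u(x,t)|_D > d_Esc}` (for the minimum point `0`). -/
def escSet (D : Matrix (Fin n) (Fin n) ℝ) (dEsc : ℝ)
    (u : ℝ → ℝ → EucSp n) (t : ℝ) : Set ℝ := {x | dEsc < normD D (u x t)}

/-- The weight `χ(x,t) = min(1, e^{-κ(|x|-ct)})`. -/
def chiW (κ c x t : ℝ) : ℝ := min 1 (Real.exp (-(κ * (|x| - c * t))))

/-- `E` is the asymptotic energy of the solution `u`. -/
def AsympEnergy (V : EucSp n → ℝ) (D : Matrix (Fin n) (Fin n) ℝ)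
    (u ux : ℝ → ℝ → EucSp n) (E : EReal) : Prop :=
  ∃ c₀ > (0:ℝ), ∀ c ≥ c₀,
    Tendsto (fun t => ((∫ x in (-(c*t))..(c*t), lagr V D (u x t) (ux x t) : ℝ) : EReal))
      atTop (nhds E)

/-- Normalized bistable stationary solution (with left-end limit `mm`). -/
def Normalized (D : Matrix (Fin n) (Fin n) ℝ) (dEsc : ℝ)
    (w : ℝ → EucSp n) (mm : EucSp n) : Prop :=
  normD D (w 0 - mm) = dEsc ∧ ∀ x < (0:ℝ), normD D (w x - mm) < dEsc

/-- Hypothesis (DiscStat). -/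
def DiscStat (V : EucSp n → ℝ) (D : Matrix (Fin n) (Fin n) ℝ) (dEsc : ℝ) : Prop :=
  ∀ mm ∈ M0 V, IsTotallyDisconnected
    {p : EucSp n × EucSp n | ∃ w : ℝ → EucSp n, IsStationarySol V D w ∧
      (∃ mp ∈ M0 V, Connects w mm mp) ∧ (∃ x y : ℝ, w x ≠ w y) ∧
      Normalized D dEsc w mm ∧ p = (w 0, deriv w 0)}


/-! Put `Q = |v|_D²`. Since `e^{κx} Q(x) → 0` as `x → -∞`,
`Q(0) = ∫_{-∞}^0 (e^{κx} Q)' = ∫_{-∞}^0 e^{κx} (Q' + κQ)`, and the same identity for `x ↦ v(-x)`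
covers `[0, ∞)`. With `Q' = 2⟨v, v'⟩_D`, Young's inequality
`2⟨v, v'⟩_D ≤ |v|_D²/λ + λ|v'|_D² ≤ |v|² + λ|v'|_D²` and `κQ ≤ κλ|v|²` bound both integrands by
`max(1 + κλ, λ) ψ (|v|² + |v'|_D²)`; adding the two half-line estimates gives the factor `1/2`. -/

open Topology Matrix
open scoped InnerProductSpace

section DotD

variable {D : Matrix (Fin n) (Fin n) ℝ}

theorem dotD_eq_inner (a b : EucSp n) :
    dotD D a b = ⟪a, toEuclideanCLM (𝕜 := ℝ) D b⟫_ℝ := by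
  rw [inner_toEuclideanCLM]
  rfl

theorem dotD_comm (hD : D.IsHermitian) (a b : EucSp n) : dotD D a b = dotD D b a := by
  rw [dotD_eq_inner, dotD_eq_inner, inner_toEuclideanCLM, inner_toEuclideanCLM,
    dotProduct_mulVec, ← mulVec_transpose, dotProduct_comm, show Dᵀ = D from hD]

theorem dotD_self_nonneg (hD : D.PosSemidef) (a : EucSp n) : 0 ≤ dotD D a a := by
  simpa [dotD_eq_inner, inner_toEuclideanCLM] using hD.dotProduct_mulVec_nonneg a.ofLp

theorem dotD_self_pos (hD : D.PosDef) {a : EucSp n} (ha : a ≠ 0) : 0 < dotD D a a := by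
  simpa [dotD_eq_inner, inner_toEuclideanCLM] using
    hD.dotProduct_mulVec_pos (x := a.ofLp) (by simpa using ha)

@[simp]
theorem dotD_neg_neg (a b : EucSp n) : dotD D (-a) (-b) = dotD D a b := by
  simp [dotD_eq_inner]

theorem dotD_smul_smul (s t : ℝ) (a b : EucSp n) :
    dotD D (s • a) (t • b) = s * t * dotD D a b := by
  simp only [dotD_eq_inner, map_smul, real_inner_smul_left, real_inner_smul_right]
  ring

theorem two_mul_mul_dotD_le (hD : D.PosSemidef) (t : ℝ) (a b : EucSp n) :
    2 * t * dotD D a b ≤ dotD D a a + t ^ 2 * dotD D b b := by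
  have h := dotD_self_nonneg hD (a - t • b)
  simp only [dotD_eq_inner, map_sub, map_smul, inner_sub_left, inner_sub_right,
    real_inner_smul_left, real_inner_smul_right] at h
  simp only [← dotD_eq_inner, dotD_comm hD.isHermitian b a] at h
  nlinarith

theorem dotD_self_le_of_mem_upperBounds {lam : ℝ}
    (hlam : lam ∈ upperBounds {l : ℝ | ∃ w : EucSp n, ‖w‖ = 1 ∧ l = dotD D w w})
    (a : EucSp n) : dotD D a a ≤ lam * ‖a‖ ^ 2 := by
  rcases eq_or_ne a 0 with rfl | ha
  · simp [dotD]
  have hna : 0 < ‖a‖ := norm_pos_iff.mpr ha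
  have hunit := hlam ⟨‖a‖⁻¹ • a, by simp [norm_smul, hna.ne'], rfl⟩
  rw [dotD_smul_smul] at hunit
  field_simp at hunit
  linarith

theorem HasDerivAt.dotD_self (hD : D.IsHermitian) {v : ℝ → EucSp n} {w : EucSp n} {x : ℝ}
    (hv : HasDerivAt v w x) :
    HasDerivAt (fun y => dotD D (v y) (v y)) (2 * dotD D (v x) w) x := by
  have h := hv.inner ℝ ((toEuclideanCLM (𝕜 := ℝ) D).hasFDerivAt.comp_hasDerivAt x hv)
  simp only [Function.comp_apply, ← dotD_eq_inner, dotD_comm hD w] at h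
  rwa [two_mul]

theorem Continuous.dotD {f g : ℝ → EucSp n} (hf : Continuous f) (hg : Continuous g) :
    Continuous fun x => dotD D (f x) (g x) := by
  simp_rw [dotD_eq_inner]
  fun_prop

theorem abs_two_mul_dotD_add_le (hD : D.PosSemidef) {lam κ : ℝ}
    (hlam₀ : 0 < lam) (hlam : ∀ a : EucSp n, dotD D a a ≤ lam * ‖a‖ ^ 2) (hκ : 0 ≤ κ)
    (a b : EucSp n) :
    |2 * dotD D a b + κ * dotD D a a| ≤ max (1 + κ * lam) lam * (‖a‖ ^ 2 + dotD D b b) := by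
  have hcross : |2 * dotD D a b| ≤ ‖a‖ ^ 2 + lam * dotD D b b := by
    have hplus := two_mul_mul_dotD_le hD lam a b
    have hminus := two_mul_mul_dotD_le hD (-lam) a b
    have haa := hlam a
    refine abs_le.mpr ⟨?_, ?_⟩ <;> refine le_of_mul_le_mul_left ?_ hlam₀ <;> nlinarith
  have hbb := dotD_self_nonneg hD b
  calc |2 * dotD D a b + κ * dotD D a a|
      ≤ |2 * dotD D a b| + κ * dotD D a a := by
        grw [abs_add_le, abs_of_nonneg (mul_nonneg hκ (dotD_self_nonneg hD a))]
    _ ≤ (1 + κ * lam) * ‖a‖ ^ 2 + lam * dotD D b b := by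
        nlinarith [mul_le_mul_of_nonneg_left (hlam a) hκ]
    _ ≤ max (1 + κ * lam) lam * (‖a‖ ^ 2 + dotD D b b) := by
        nlinarith [le_max_left (1 + κ * lam) lam, le_max_right (1 + κ * lam) lam,
          sq_nonneg ‖a‖]

end DotD

section Weight

variable {κ : ℝ}

theorem psiW_neg (x : ℝ) : psiW κ (-x) = psiW κ x := by
  simp [psiW]

theorem psiW_of_nonpos {x : ℝ} (hx : x ≤ 0) : psiW κ x = exp (κ * x) := by
  simp [psiW, abs_of_nonpos hx]

theorem integrable_psiW (hκ : 0 < κ) : Integrable (psiW κ) := by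
  rw [← integrableOn_univ, ← Iic_union_Ioi (a := 0)]
  refine IntegrableOn.union ?_ ?_
  · exact (integrableOn_exp_mul_Iic hκ 0).congr_fun (fun x hx => (psiW_of_nonpos hx).symm)
      measurableSet_Iic
  · refine (integrableOn_exp_mul_Ioi (neg_neg_of_pos hκ) 0).congr_fun (fun x hx => ?_)
      measurableSet_Ioi
    simp [psiW, abs_of_pos (mem_Ioi.mp hx)]

end Weight

theorem integral_Iic_exp_mul_deriv_add {g g' : ℝ → ℝ} {κ C : ℝ} (hκ : 0 < κ)
    (hg : ∀ x, HasDerivAt g (g' x) x) (hgC : ∀ x, |g x| ≤ C)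
    (hint : IntegrableOn (fun x => exp (κ * x) * (g' x + κ * g x)) (Iic 0)) :
    ∫ x in Iic 0, exp (κ * x) * (g' x + κ * g x) = g 0 := by
  have hderiv : ∀ x, HasDerivAt (fun y => exp (κ * y) * g y)
      (exp (κ * x) * (g' x + κ * g x)) x := fun x => by
    refine ((((hasDerivAt_id' x).const_mul κ).exp).fun_mul (hg x)).congr_deriv ?_
    ring
  have hexp : Tendsto (fun x => exp (κ * x)) atBot (𝓝 0) :=
    tendsto_exp_atBot.comp (tendsto_id.const_mul_atBot hκ)
  have hlim : Tendsto (fun y => exp (κ * y) * g y) atBot (𝓝 0) := by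
    refine squeeze_zero_norm (fun x => ?_) (by simpa using hexp.mul_const C)
    rw [norm_mul, norm_of_nonneg (exp_pos _).le]
    exact mul_le_mul_of_nonneg_left (hgC x) (exp_pos _).le
  simpa using integral_Iic_of_hasDerivAt_of_tendsto' (fun x _ => hderiv x) hint hlim

section HalfLine

variable {D : Matrix (Fin n) (Fin n) ℝ} {lam κ C C' : ℝ} {v : ℝ → EucSp n}

theorem integrable_psiW_mul_norm_sq_add_dotD_deriv (hD : D.PosSemidef) (hlam₀ : 0 ≤ lam)
    (hlam : ∀ a : EucSp n, dotD D a a ≤ lam * ‖a‖ ^ 2) (hκ : 0 < κ) (hv : ContDiff ℝ 1 v)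
    (hvC : ∀ x, ‖v x‖ ≤ C) (hv'C : ∀ x, ‖deriv v x‖ ≤ C') :
    Integrable fun x => psiW κ x * (‖v x‖ ^ 2 + dotD D (deriv v x) (deriv v x)) := by
  have hv' := hv.continuous_deriv le_rfl
  refine (integrable_psiW hκ).mul_bdd (c := C ^ 2 + lam * C' ^ 2)
    ((hv.continuous.norm.pow 2).add (hv'.dotD hv')).aestronglyMeasurable
    (ae_of_all _ fun x => ?_)
  rw [norm_of_nonneg (add_nonneg (sq_nonneg _) (dotD_self_nonneg hD _))]
  gcongr
  · exact hvC x
  · exact (hlam _).trans (by gcongr; exact hv'C x)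

theorem dotD_self_le_mul_setIntegral_Iic (hD : D.PosSemidef) (hlam₀ : 0 < lam)
    (hlam : ∀ a : EucSp n, dotD D a a ≤ lam * ‖a‖ ^ 2) (hκ : 0 < κ) (hv : ContDiff ℝ 1 v)
    (hvC : ∀ x, ‖v x‖ ≤ C) (hv'C : ∀ x, ‖deriv v x‖ ≤ C') :
    dotD D (v 0) (v 0) ≤ max (1 + κ * lam) lam *
      ∫ x in Iic 0, psiW κ x * (‖v x‖ ^ 2 + dotD D (deriv v x) (deriv v x)) := by
  set M := max (1 + κ * lam) lam
  have hQ : ∀ x, HasDerivAt (fun y => dotD D (v y) (v y)) (2 * dotD D (v x) (deriv v x)) x :=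
    fun x => (hv.differentiable one_ne_zero x).hasDerivAt.dotD_self hD.isHermitian
  have hQC : ∀ x, |dotD D (v x) (v x)| ≤ lam * C ^ 2 := fun x => by
    rw [abs_of_nonneg (dotD_self_nonneg hD _)]
    exact (hlam _).trans (by gcongr; exact hvC x)
  have hint : IntegrableOn
      (fun x => M * (psiW κ x * (‖v x‖ ^ 2 + dotD D (deriv v x) (deriv v x)))) (Iic 0) :=
    ((integrable_psiW_mul_norm_sq_add_dotD_deriv hD hlam₀.le hlam hκ hv hvC hv'C).const_mul
      M).integrableOn
  have hpointwise : ∀ x ∈ Iic (0 : ℝ),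
      ‖exp (κ * x) * (2 * dotD D (v x) (deriv v x) + κ * dotD D (v x) (v x))‖ ≤
        M * (psiW κ x * (‖v x‖ ^ 2 + dotD D (deriv v x) (deriv v x))) := fun x hx => by
    rw [norm_mul, norm_of_nonneg (exp_pos _).le, psiW_of_nonpos hx, mul_left_comm]
    exact mul_le_mul_of_nonneg_left (abs_two_mul_dotD_add_le hD hlam₀ hlam hκ.le _ _)
      (exp_pos _).le
  have hcont : Continuous
      fun x => exp (κ * x) * (2 * dotD D (v x) (deriv v x) + κ * dotD D (v x) (v x)) := by
    have := hv.continuous.dotD (D := D) (hv.continuous_deriv le_rfl)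
    have := hv.continuous.dotD (D := D) hv.continuous
    fun_prop
  have hintQ := hint.mono' hcont.aestronglyMeasurable
    ((ae_restrict_iff' measurableSet_Iic).mpr (ae_of_all _ hpointwise))
  rw [← integral_Iic_exp_mul_deriv_add hκ hQ hQC hintQ, ← integral_const_mul]
  exact setIntegral_mono_on hintQ hint measurableSet_Iic
    fun x hx => (le_abs_self _).trans (hpointwise x hx)

theorem dotD_self_le_mul_setIntegral_Ioi (hD : D.PosSemidef) (hlam₀ : 0 < lam)
    (hlam : ∀ a : EucSp n, dotD D a a ≤ lam * ‖a‖ ^ 2) (hκ : 0 < κ) (hv : ContDiff ℝ 1 v)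
    (hvC : ∀ x, ‖v x‖ ≤ C) (hv'C : ∀ x, ‖deriv v x‖ ≤ C') :
    dotD D (v 0) (v 0) ≤ max (1 + κ * lam) lam *
      ∫ x in Ioi 0, psiW κ x * (‖v x‖ ^ 2 + dotD D (deriv v x) (deriv v x)) := by
  have h := dotD_self_le_mul_setIntegral_Iic (v := fun x => v (-x)) hD hlam₀ hlam hκ
    (hv.comp contDiff_neg) (fun x => hvC (-x)) (fun x => by simpa [deriv_comp_neg] using hv'C (-x))
  have hreflect := integral_comp_neg_Iic 0
    fun x => psiW κ x * (‖v x‖ ^ 2 + dotD D (deriv v x) (deriv v x))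
  simp only [psiW_neg, neg_zero] at hreflect
  simpa [deriv_comp_neg, hreflect] using h

end HalfLine

theorem statement7_general
    (n : ℕ)
    (D : Matrix (Fin n) (Fin n) ℝ) (hD : D.PosDef)
    (lam : ℝ)
    (hlam : IsGreatest {l : ℝ | ∃ w : EucSp n, ‖w‖ = 1 ∧ l = dotD D w w} lam)
    (κ : ℝ) (hκ : 0 < κ)
    (v : ℝ → EucSp n) (hv : ContDiff ℝ 1 v)
    (hvb : ∃ C : ℝ, ∀ x : ℝ, ‖v x‖ ≤ C)
    (hvb' : ∃ C : ℝ, ∀ x : ℝ, ‖deriv v x‖ ≤ C) :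
    dotD D (v 0) (v 0) ≤ max ((1 + κ * lam) / 2) (lam / 2) *
      ∫ x : ℝ, psiW κ x * (‖v x‖ ^ 2 + dotD D (deriv v x) (deriv v x)) := by
  obtain ⟨C, hvC⟩ := hvb
  obtain ⟨C', hv'C⟩ := hvb'
  have hlam₀ : 0 < lam := by
    obtain ⟨w, hw, rfl⟩ := hlam.1
    exact dotD_self_pos hD (by rintro rfl; simp at hw)
  have hlam' := dotD_self_le_of_mem_upperBounds hlam.2
  have hleft := dotD_self_le_mul_setIntegral_Iic hD.posSemidef hlam₀ hlam' hκ hv hvC hv'C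
  have hright := dotD_self_le_mul_setIntegral_Ioi hD.posSemidef hlam₀ hlam' hκ hv hvC hv'C
  have hint :=
    integrable_psiW_mul_norm_sq_add_dotD_deriv hD.posSemidef hlam₀.le hlam' hκ hv hvC hv'C
  rw [← intervalIntegral.integral_Iic_add_Ioi (b := 0) hint.integrableOn hint.integrableOn,
    max_div_div_right zero_le_two]
  linarith

/-- control of the pointwise value `|v(0)|_D²` by a weighted
integral of `|v|² + |v'|_D²`. -/
theorem statement7
    (n : ℕ) (hn : 1 ≤ n)
    (D : Matrix (Fin n) (Fin n) ℝ) (hD : D.PosDef)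
    (lam : ℝ)
    (hlam : IsGreatest {l : ℝ | ∃ w : EucSp n, ‖w‖ = 1 ∧ l = dotD D w w} lam)
    (κ : ℝ) (hκ : 0 < κ)
    (v : ℝ → EucSp n) (hv : ContDiff ℝ 1 v)
    (hvb : ∃ C : ℝ, ∀ x : ℝ, ‖v x‖ ≤ C)
    (hvb' : ∃ C : ℝ, ∀ x : ℝ, ‖deriv v x‖ ≤ C) :
    dotD D (v 0) (v 0) ≤ max ((1 + κ * lam) / 2) (lam / 2) *
      ∫ x : ℝ, psiW κ x * (‖v x‖ ^ 2 + dotD D (deriv v x) (deriv v x)) :=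
  statement7_general n D hD lam hlam κ hκ v hv hvb hvb'
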